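/- arXiv:1912.08915 — 2 statements merged into one kernel-verified Lean document; each statement's English description precedes it below -/
import Mathlib

section
/- Let W and B be d×d real symmetric positive semidefinite matrices. Then the matrix I + W B is invertible, where I is the d×d identity matrix. -/
open Matrix

section

variable {m n : Type*} [Fintype m] [Fintype n] [DecidableEq m] [DecidableEq n]

theorem Matrix.isUnit_one_add_mul_comm {α : Type*} [CommRing α] (A : Matrix m n α)
    (B : Matrix n m α) : IsUnit (1 + A * B) ↔ IsUnit (1 + B * A) := by
  rw [isUnit_iff_isUnit_det, isUnit_iff_isUnit_det, det_one_add_mul_comm]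

open scoped ComplexOrder MatrixOrder in
/-- Writing `A = Cᴴ * C`, the matrix `1 + A * B` is invertible together with `1 + C * B * Cᴴ`,
which is positive definite. -/
theorem Matrix.PosSemidef.isUnit_one_add_mul {𝕜 : Type*} [RCLike 𝕜] {A B : Matrix n n 𝕜}
    (hA : A.PosSemidef) (hB : B.PosSemidef) : IsUnit (1 + A * B) := by
  obtain ⟨C, rfl⟩ := CStarAlgebra.nonneg_iff_eq_star_mul_self.mp hA.nonneg
  have hPD : (1 + C * B * Cᴴ).PosDef :=
    PosDef.one.add_posSemidef (hB.mul_mul_conjTranspose_same C)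
  rw [Matrix.mul_assoc, isUnit_one_add_mul_comm, star_eq_conjTranspose]
  exact hPD.isUnit

end

/-- Key invertibility step in the proof of Proposition 1: if `W` and `B` are real
symmetric positive semidefinite `d × d` matrices, then `I + W * B` is invertible. -/
theorem one_add_prod_psd_isUnit {d : ℕ}
    (W B : Matrix (Fin d) (Fin d) ℝ)
    (hW : W.PosSemidef) (hB : B.PosSemidef) :
    IsUnit (1 + W * B) :=
  hW.isUnit_one_add_mul hB
end

section
/- Let M be an n×n real symmetric positive definite matrix, Γ an n×n real matrix such that MΓ is symmetric positive definite, F a d×n real matrix with M-adjoint F* := M⁻¹Fᵀ, W a d×d real symmetric positive semidefinite matrix, and σ > 0. Set S := I + σ⁻² W F Γ F*. Then tr[(σ⁻²F*WF + Γ⁻¹)⁻¹] = tr[Γ] − σ⁻² tr[S⁻¹ W F Γ² F*]. -/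
set_option maxHeartbeats 1000000

open Matrix

lemma psd_smul' {m : ℕ} {A : Matrix (Fin m) (Fin m) ℝ} (hA : A.PosSemidef) {c : ℝ}
    (hc : 0 ≤ c) : (c • A).PosSemidef := by
  constructor
  · show (c • A)ᴴ = c • A
    rw [conjTranspose_smul, star_trivial, hA.1.eq]
  · intro x
    exact (hA.smul hc).2 x

/-- Measurement-space reformulation of the A-optimal criterion (equations (15)–(17)):
the trace of the `n × n` posterior covariance equals the trace of the prior covariance
minus `σ⁻²` times the trace of the `d × d` matrix `S⁻¹ W F Γ² F*`, where `F* = M⁻¹ Fᵀ`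
is the `M`-adjoint of `F` and `S = I + σ⁻² W F Γ F*`. -/
theorem trace_posterior_measurement_space {n d : ℕ}
    (M Γ : Matrix (Fin n) (Fin n) ℝ)
    (F : Matrix (Fin d) (Fin n) ℝ) (W : Matrix (Fin d) (Fin d) ℝ)
    (σ : ℝ) (hσ : 0 < σ)
    (hM : M.PosDef) (hMΓ : (M * Γ).PosDef) (hW : W.PosSemidef) :
    (((σ ^ 2)⁻¹ • (M⁻¹ * Fᵀ * W * F) + Γ⁻¹)⁻¹).trace =
      Γ.trace -
        (σ ^ 2)⁻¹ *
          ((1 + (σ ^ 2)⁻¹ • (W * F * Γ * (M⁻¹ * Fᵀ)))⁻¹ *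
            (W * F * Γ ^ 2 * (M⁻¹ * Fᵀ))).trace := by
  set c : ℝ := (σ ^ 2)⁻¹ with hc
  have hc0 : 0 ≤ c := by positivity
  set Fs : Matrix (Fin n) (Fin d) ℝ := M⁻¹ * Fᵀ with hFs
  set S : Matrix (Fin d) (Fin d) ℝ := 1 + c • (W * F * Γ * Fs) with hS
  have hMu : IsUnit M.det := isUnit_iff_ne_zero.mpr hM.det_pos.ne'
  have hΓu : IsUnit Γ.det := by
    have := isUnit_iff_ne_zero.mpr hMΓ.det_pos.ne'
    rw [det_mul] at this
    exact isUnit_of_mul_isUnit_right this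
  have hQ : (Γ * M⁻¹).PosSemidef := by
    have h1 : Γ * M⁻¹ = M⁻¹ * (M * Γ) * (M⁻¹)ᴴ := by
      rw [conjTranspose_nonsing_inv, hM.isHermitian.eq]
      rw [← Matrix.mul_assoc, Matrix.nonsing_inv_mul _ hMu, Matrix.one_mul]
    rw [h1]
    exact hMΓ.posSemidef.mul_mul_conjTranspose_same M⁻¹
  -- S is invertible
  have hSu : IsUnit S.det := by
    obtain ⟨R, hsq, hW2⟩ : ∃ R : Matrix (Fin d) (Fin d) ℝ, R.PosSemidef ∧ R * R = W :=
      by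
        open scoped MatrixOrder in
        exact ⟨CFC.sqrt W, (CFC.sqrt_nonneg W).posSemidef, CFC.sqrt_mul_sqrt_self W hW.nonneg⟩
    set X : Matrix (Fin d) (Fin d) ℝ := F * Γ * (M⁻¹ * Fᵀ) with hX
    have e1 : 1 + R * (c • (R * X)) = S := by
      rw [mul_smul_comm, ← Matrix.mul_assoc, hW2, hS]
      congr 1
      rw [hX]
      congr 1
      simp only [Matrix.mul_assoc]
      rfl
    have e2 : c • (R * X) * R
        = c • ((R * F) * (Γ * M⁻¹) * (R * F)ᴴ) := by
      rw [Matrix.smul_mul]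
      congr 1
      rw [conjTranspose_mul, hsq.1.eq, conjTranspose_eq_transpose_of_trivial, hX]
      simp only [Matrix.mul_assoc]
    have hpd : (1 + c • (R * X) * R).PosDef := by
      rw [e2]
      exact Matrix.PosDef.add_posSemidef Matrix.PosDef.one
        (psd_smul' (hQ.mul_mul_conjTranspose_same _) hc0)
    have : S.det = (1 + c • (R * X) * R).det := by
      rw [← e1, det_one_add_mul_comm]
    rw [this]
    exact isUnit_iff_ne_zero.mpr hpd.det_pos.ne'
  -- key identity
  have key : (c • (Fs * W * F) + Γ⁻¹) * (Γ * Fs) = Fs * S := by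
    rw [Matrix.add_mul, hS, Matrix.mul_add, Matrix.mul_one, Matrix.mul_smul,
      Matrix.smul_mul, ← Matrix.mul_assoc Γ⁻¹, Matrix.nonsing_inv_mul _ hΓu, Matrix.one_mul,
      add_comm]
    congr 2
    simp only [Matrix.mul_assoc]
  have hinv : (c • (Fs * W * F) + Γ⁻¹)⁻¹ = Γ - c • (Γ * Fs * S⁻¹ * (W * F * Γ)) := by
    apply Matrix.inv_eq_right_inv
    have h2 : (c • (Fs * W * F) + Γ⁻¹) * (Γ * Fs * S⁻¹ * (W * F * Γ))
        = Fs * (W * F * Γ) := by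
      have ha : Γ * Fs * S⁻¹ * (W * F * Γ) = (Γ * Fs) * (S⁻¹ * (W * F * Γ)) := by
        simp only [Matrix.mul_assoc]
      rw [ha, ← Matrix.mul_assoc, key, Matrix.mul_assoc Fs, ← Matrix.mul_assoc S,
        Matrix.mul_nonsing_inv _ hSu, Matrix.one_mul]
    rw [Matrix.mul_sub, Matrix.mul_smul, h2, Matrix.add_mul, Matrix.nonsing_inv_mul _ hΓu,
      Matrix.smul_mul]
    have hb : Fs * W * F * Γ = Fs * (W * F * Γ) := by simp only [Matrix.mul_assoc]
    rw [hb, add_comm, add_sub_cancel_right]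
  have hA : M⁻¹ * Fᵀ * W * F = Fs * W * F := by rw [hFs]
  rw [hA, hinv, trace_sub, trace_smul, smul_eq_mul]
  congr 2
  rw [show Γ * Fs * S⁻¹ * (W * F * Γ) = (Γ * Fs * S⁻¹ * (W * F)) * Γ by
      simp only [Matrix.mul_assoc],
    trace_mul_comm,
    show Γ * (Γ * Fs * S⁻¹ * (W * F)) = (Γ * (Γ * Fs)) * (S⁻¹ * (W * F)) by
      simp only [Matrix.mul_assoc],
    trace_mul_comm]
  congr 1
  rw [hFs, pow_two]
  simp only [Matrix.mul_assoc]
end
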